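/- The identity I₁ − I₂ = ‖x|z‖²‖y|z‖² − |(x,y|z)|² holds for any x, y, z ∈ X and a, A ∈ K, where I₁ = Re[(A‖y|z‖² − (x,y|z))(conj((x,y|z)) − conj(a)‖y|z‖²)] and I₂ = ‖y|z‖² Re(Ay − x, x − ay | z). -/
import Mathlib


open RCLike

/-- A 2-inner product space over `𝕜 = ℝ` or `ℂ`. -/
structure TwoIP (𝕜 : Type) (X : Type) [RCLike 𝕜] [AddCommGroup X] [Module 𝕜 X] where
  ip : X → X → X → 𝕜
  re_nonneg : ∀ x z : X, 0 ≤ re (ip x x z)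
  im_zero : ∀ x z : X, im (ip x x z) = 0
  eq_zero_iff : ∀ x z : X, ip x x z = 0 ↔ ¬ LinearIndependent 𝕜 ![x, z]
  swap : ∀ x z : X, ip x x z = ip z z x
  conj_symm : ∀ x y z : X, ip x y z = (starRingEnd 𝕜) (ip y x z)
  smul_left : ∀ (α : 𝕜) (x y z : X), ip (α • x) y z = α * ip x y z
  add_left : ∀ x x' y z : X, ip (x + x') y z = ip x y z + ip x' y z

section Aux

variable {𝕜 X : Type} [RCLike 𝕜] [AddCommGroup X] [Module 𝕜 X] (T : TwoIP 𝕜 X)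

lemma TwoIP.sub_left (x x' y z : X) :
    T.ip (x - x') y z = T.ip x y z - T.ip x' y z := by
  have : x - x' = x + (-1 : 𝕜) • x' := by
    rw [neg_one_smul]; abel
  rw [this, T.add_left, T.smul_left]; ring

lemma TwoIP.add_right (x y y' z : X) :
    T.ip x (y + y') z = T.ip x y z + T.ip x y' z := by
  rw [T.conj_symm, T.add_left, map_add, ← T.conj_symm, ← T.conj_symm]

lemma TwoIP.smul_right (α : 𝕜) (x y z : X) :
    T.ip x (α • y) z = (starRingEnd 𝕜) α * T.ip x y z := by
  rw [T.conj_symm, T.smul_left, map_mul, ← T.conj_symm]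

lemma TwoIP.sub_right (x y y' z : X) :
    T.ip x (y - y') z = T.ip x y z - T.ip x y' z := by
  have : y - y' = y + (-1 : 𝕜) • y' := by
    rw [neg_one_smul]; abel
  rw [this, T.add_right, T.smul_right, map_neg, map_one]; ring

lemma TwoIP.diag_eq (x z : X) :
    T.ip x x z = ((re (T.ip x x z) : ℝ) : 𝕜) := by
  apply RCLike.ext <;> simp [T.im_zero]

end Aux

theorem stmt {𝕜 X : Type} [RCLike 𝕜] [AddCommGroup X] [Module 𝕜 X]
    (T : TwoIP 𝕜 X) (hdim : 1 < Module.rank 𝕜 X) (x y z : X) (a A : 𝕜) :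
    re ((A * ((re (T.ip y y z) : ℝ) : 𝕜) - T.ip x y z)
        * ((starRingEnd 𝕜) (T.ip x y z) - (starRingEnd 𝕜) a * ((re (T.ip y y z) : ℝ) : 𝕜)))
      - re (T.ip y y z) * re (T.ip (A • y - x) (x - a • y) z)
    = Real.sqrt (re (T.ip x x z)) ^ 2 * Real.sqrt (re (T.ip y y z)) ^ 2 - ‖T.ip x y z‖ ^ 2 := by
  set p : 𝕜 := T.ip x y z with hp
  have hq : T.ip y x z = (starRingEnd 𝕜) p := by rw [hp, ← T.conj_symm]
  set rxx : ℝ := re (T.ip x x z) with hrxx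
  set ryy : ℝ := re (T.ip y y z) with hryy
  have hxx : T.ip x x z = ((rxx : ℝ) : 𝕜) := T.diag_eq x z
  have hyy : T.ip y y z = ((ryy : ℝ) : 𝕜) := T.diag_eq y z
  have hexp : T.ip (A • y - x) (x - a • y) z
      = A * (starRingEnd 𝕜) p - ((rxx : ℝ) : 𝕜)
        - A * (starRingEnd 𝕜) a * ((ryy : ℝ) : 𝕜) + (starRingEnd 𝕜) a * p := by
    rw [T.sub_left, T.sub_right, T.sub_right, T.smul_left, T.smul_left, T.smul_right,
      T.smul_right, hq, hxx, hyy, ← hp]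
    ring
  have hsq : Real.sqrt rxx ^ 2 = rxx := Real.sq_sqrt (T.re_nonneg x z)
  have hsqy : Real.sqrt ryy ^ 2 = ryy := Real.sq_sqrt (T.re_nonneg y z)
  have hnorm : (‖p‖ ^ 2 : ℝ) = re (p * (starRingEnd 𝕜) p) := by
    rw [RCLike.mul_conj]
    norm_cast
  rw [hexp, hsq, hsqy, hnorm]
  have hmul : ryy * re (A * (starRingEnd 𝕜) p - ((rxx : ℝ) : 𝕜)
        - A * (starRingEnd 𝕜) a * ((ryy : ℝ) : 𝕜) + (starRingEnd 𝕜) a * p)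
      = re (((ryy : ℝ) : 𝕜) * (A * (starRingEnd 𝕜) p - ((rxx : ℝ) : 𝕜)
        - A * (starRingEnd 𝕜) a * ((ryy : ℝ) : 𝕜) + (starRingEnd 𝕜) a * p)) := by
    exact (RCLike.re_ofReal_mul ryy _).symm
  have hrr : rxx * ryy = re (((rxx : ℝ) : 𝕜) * ((ryy : ℝ) : 𝕜)) := by
    rw [← RCLike.ofReal_mul, RCLike.ofReal_re]
  rw [hmul, hrr, ← map_sub, ← map_sub]
  congr 1
  ring
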